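/- Let V be a finite vertex set, G the complete simple graph on V with face poset X_G = V ⊕ E equipped with its Alexandroff topology, W : V → V → ℝ, and λ₁ ≤ λ₂ real numbers. Then the induced dynamic relation of the multivector field at λ₂ is contained in that at λ₁ (Π_{𝒱_{λ₂}(W)} ≤ Π_{𝒱_{λ₁}(W)}); consequently every strongly connected component of Π_{𝒱_{λ₂}(W)} is contained in some strongly connected component of Π_{𝒱_{λ₁}(W)}, and the number of strongly connected components of Π_{𝒱_{λ₁}(W)} is at most the number of strongly connected components of Π_{𝒱_{λ₂}(W)}. -/

import Mathlib

/-- The face order on `V ⊕ E` of a simple graph: a vertex is below each edge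
it is an endpoint of, together with reflexivity. -/
def faceLe {V : Type*} (G : SimpleGraph V) :
    (V ⊕ G.edgeSet) → (V ⊕ G.edgeSet) → Prop
  | Sum.inl v, Sum.inl w => v = w
  | Sum.inl v, Sum.inr e => v ∈ (e : Sym2 V)
  | Sum.inr _, Sum.inl _ => False
  | Sum.inr e, Sum.inr f => e = f

/-- The Alexandroff topology associated with a relation `le` on `X`:
the open sets are exactly the upper sets with respect to `le`. -/
def alexTop (X : Type*) (le : X → X → Prop) : TopologicalSpace X where
  IsOpen s := ∀ ⦃a b : X⦄, le a b → a ∈ s → b ∈ s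
  isOpen_univ := fun _ _ _ _ => trivial
  isOpen_inter := fun _ _ hs ht _ _ hab hmem => ⟨hs hab hmem.1, ht hab hmem.2⟩
  isOpen_sUnion := fun S hS a b hab hmem => by
    obtain ⟨u, huS, hau⟩ := hmem
    exact ⟨u, huS, hS u huS hab hau⟩

/-- The active merge relation at threshold `lam` on the face poset of the
complete graph on `V`: a vertex `i` is related to the edge `s(i,j)` whenever
`W i j > lam` (taking both orientations into account via the symmetry of
`s(i,j)`). -/
def mergeRel {V : Type*} (W : V → V → ℝ) (lam : ℝ)
    (x y : V ⊕ ((⊤ : SimpleGraph V).edgeSet)) : Prop :=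
  ∃ (i j : V) (h : s(i, j) ∈ (⊤ : SimpleGraph V).edgeSet),
    W i j > lam ∧ x = Sum.inl i ∧ y = Sum.inr ⟨s(i, j), h⟩

/-- The induced dynamic relation of a partition (given as an equivalence
relation) on a space with topology `t`: `x` is related to `y` iff `y` belongs
to the block of `x` or to its closure. -/
def dynRel {X : Type*} (t : TopologicalSpace X) (P : Setoid X) (x y : X) : Prop :=
  y ∈ {z | P x z} ∪ @closure X t {z | P x z}

/-- The strongly connected component of `x` for a relation `r`: the set of
points `y` mutually reachable from `x` via the reflexive-transitive closure. -/
def scc {X : Type*} (r : X → X → Prop) (x : X) : Set X :=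
  {y | Relation.ReflTransGen r x y ∧ Relation.ReflTransGen r y x}

/-- The graph multivector field at threshold `lam`, as the equivalence relation
generated by the active merge relation. -/
def mvf {V : Type*} (W : V → V → ℝ) (lam : ℝ) :
    Setoid (V ⊕ ((⊤ : SimpleGraph V).edgeSet)) :=
  Relation.EqvGen.setoid (mergeRel W lam)

/-! Raising the threshold only removes merges, so the multivector field at `lam₂` refines the one
at `lam₁`; blocks, their closures, the dynamic relation and its strongly connected components shrink
accordingly. Hence the component at `lam₁` of a point is a function of its component at `lam₂`,
which maps the components at `lam₂` onto those at `lam₁`. -/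

open Set

theorem Function.FactorsThrough.ncard_range_le {α β γ : Type*} {f : α → β} {g : α → γ}
    (hgf : g.FactorsThrough f) (hf : (range f).Finite) :
    (range g).ncard ≤ (range f).ncard := by
  classical
  obtain hα | ⟨⟨a⟩⟩ := isEmpty_or_nonempty α
  · simp [range_eq_empty]
  have hg : range g = Function.extend f g (fun _ => g a) '' range f := by
    rw [← range_comp]
    exact congrArg range (funext fun x => (hgf.extend_apply _ x).symm)
  rw [hg]
  exact ncard_image_le hf

section StronglyConnectedComponents

variable {X : Type*} {r s : X → X → Prop}

theorem mem_scc_self (x : X) : x ∈ scc r x :=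
  ⟨.refl, .refl⟩

theorem scc_eq_of_mem {x y : X} (hy : y ∈ scc r x) : scc r y = scc r x := by
  ext z
  exact ⟨fun hz => ⟨hy.1.trans hz.1, hz.2.trans hy.2⟩,
    fun hz => ⟨hy.2.trans hz.1, hz.2.trans hy.1⟩⟩

theorem scc_mono (hrs : r ≤ s) (x : X) : scc r x ⊆ scc s x :=
  fun _ hy => ⟨Relation.ReflTransGen.mono hrs _ _ hy.1, Relation.ReflTransGen.mono hrs _ _ hy.2⟩

theorem scc_factorsThrough (hrs : r ≤ s) : (scc s).FactorsThrough (scc r) := by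
  intro x y hxy
  have hy : y ∈ scc r x := hxy ▸ mem_scc_self y
  exact (scc_eq_of_mem (scc_mono hrs x hy)).symm

theorem ncard_range_scc_le [Finite X] (hrs : r ≤ s) :
    (range (scc s)).ncard ≤ (range (scc r)).ncard :=
  (scc_factorsThrough hrs).ncard_range_le (toFinite _)

end StronglyConnectedComponents

theorem dynRel_mono {X : Type*} (t : TopologicalSpace X) {P Q : Setoid X} (hPQ : P ≤ Q) :
    dynRel t P ≤ dynRel t Q := by
  intro x y hxy
  have hblock : {z | P x z} ⊆ {z | Q x z} := fun _ hz => hPQ hz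
  exact hxy.imp (fun hy => hblock hy) (fun hy => closure_mono hblock hy)

theorem mergeRel_antitone {V : Type*} (W : V → V → ℝ) : Antitone (mergeRel W) := by
  rintro lam₁ lam₂ h - - ⟨i, j, hij, hW, rfl, rfl⟩
  exact ⟨i, j, hij, h.trans_lt hW, rfl, rfl⟩

theorem mvf_antitone {V : Type*} (W : V → V → ℝ) : Antitone (mvf W) :=
  fun _ _ h => Setoid.eqvGen_mono (mergeRel_antitone W h)

theorem Set.setOf_exists_eq_apply {α β : Type*} (f : α → β) :
    {b | ∃ a, b = f a} = range f := by
  simp only [range, eq_comm]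

theorem morse_sets_monotone_general {V : Type*} [Fintype V]
    (W : V → V → ℝ) (lam₁ lam₂ : ℝ) (h : lam₁ ≤ lam₂) :
    (∀ x y : V ⊕ ((⊤ : SimpleGraph V).edgeSet),
      dynRel (alexTop _ (faceLe (⊤ : SimpleGraph V))) (mvf W lam₂) x y →
      dynRel (alexTop _ (faceLe (⊤ : SimpleGraph V))) (mvf W lam₁) x y) ∧
    (∀ x : V ⊕ ((⊤ : SimpleGraph V).edgeSet),
      ∃ z, scc (dynRel (alexTop _ (faceLe (⊤ : SimpleGraph V))) (mvf W lam₂)) x ⊆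
        scc (dynRel (alexTop _ (faceLe (⊤ : SimpleGraph V))) (mvf W lam₁)) z) ∧
    {s : Set (V ⊕ ((⊤ : SimpleGraph V).edgeSet)) |
        ∃ x, s = scc (dynRel (alexTop _ (faceLe (⊤ : SimpleGraph V))) (mvf W lam₁)) x}.ncard ≤
      {s : Set (V ⊕ ((⊤ : SimpleGraph V).edgeSet)) |
        ∃ x, s = scc (dynRel (alexTop _ (faceLe (⊤ : SimpleGraph V))) (mvf W lam₂)) x}.ncard := by
  have hdyn := dynRel_mono (alexTop _ (faceLe (⊤ : SimpleGraph V))) (mvf_antitone W h)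
  refine ⟨hdyn, fun x => ⟨x, scc_mono hdyn x⟩, ?_⟩
  rw [setOf_exists_eq_apply, setOf_exists_eq_apply]
  exact ncard_range_scc_le hdyn

/-- Monotonicity along the filtration: for `lam₁ ≤ lam₂`, the induced dynamic
relation of the multivector field at `lam₂` is contained in the one at `lam₁`;
consequently every strongly connected component at `lam₂` is contained in some
strongly connected component at `lam₁`, and the number of strongly connected
components at `lam₁` is at most the number at `lam₂`. -/
theorem morse_sets_monotone {V : Type*} [Fintype V] [DecidableEq V]
    (W : V → V → ℝ) (lam₁ lam₂ : ℝ) (h : lam₁ ≤ lam₂) :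
    (∀ x y : V ⊕ ((⊤ : SimpleGraph V).edgeSet),
      dynRel (alexTop _ (faceLe (⊤ : SimpleGraph V))) (mvf W lam₂) x y →
      dynRel (alexTop _ (faceLe (⊤ : SimpleGraph V))) (mvf W lam₁) x y) ∧
    (∀ x : V ⊕ ((⊤ : SimpleGraph V).edgeSet),
      ∃ z, scc (dynRel (alexTop _ (faceLe (⊤ : SimpleGraph V))) (mvf W lam₂)) x ⊆
        scc (dynRel (alexTop _ (faceLe (⊤ : SimpleGraph V))) (mvf W lam₁)) z) ∧
    {s : Set (V ⊕ ((⊤ : SimpleGraph V).edgeSet)) |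
        ∃ x, s = scc (dynRel (alexTop _ (faceLe (⊤ : SimpleGraph V))) (mvf W lam₁)) x}.ncard ≤
      {s : Set (V ⊕ ((⊤ : SimpleGraph V).edgeSet)) |
        ∃ x, s = scc (dynRel (alexTop _ (faceLe (⊤ : SimpleGraph V))) (mvf W lam₂)) x}.ncard :=
  morse_sets_monotone_general W lam₁ lam₂ h
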